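/- arXiv:1111.3828 — 2 statements merged into one kernel-verified Lean document; each statement's English description precedes it below -/
import Mathlib

section
/- There exists an admissible subgroup U for K: a subgroup U ⊆ O_K^{*,+}, free abelian of rank s, such that the image of U under the map u ↦ (log|σ₁(u)|,…,log|σ_s(u)|) (the projection of l(U) to the first s coordinates) is a lattice in ℝ^s, i.e. a discrete subgroup whose ℝ-linear span is all of ℝ^s. -/
/-!
Setting: `K` is a number field with exactly `s ≥ 1` real embeddings
`σr 0, …, σr (s-1) : K →+* ℝ` and `2t ≥ 2` complex (non-real) embeddings, of which
`σc 0, …, σc (t-1) : K →+* ℂ` are pairwise non-conjugate representatives.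
-/

noncomputable section
open NumberField

/-- The subgroup `O_K^{*,+}` of totally positive units: units `u` of the ring of integers
with `σᵢ(u) > 0` for every real embedding `σᵢ`, `i = 1, …, s`. -/
def posUnits (K : Type) [Field K] [NumberField K] {s : ℕ}
    (σr : Fin s → (K →+* ℝ)) : Subgroup (𝓞 K)ˣ where
  carrier := {u | ∀ i, 0 < σr i ((u : 𝓞 K) : K)}
  mul_mem' := by
    intro a b ha hb i
    push_cast [map_mul]
    exact mul_pos (ha i) (hb i)
  one_mem' := by intro i; simp
  inv_mem' := by
    intro a ha i
    have h1 : σr i ((↑(a⁻¹ * a) : 𝓞 K) : K) = 1 := by simp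
    have h2 : σr i ((↑(a⁻¹) : 𝓞 K) : K) * σr i ((↑a : 𝓞 K) : K) = 1 := by
      rw [← h1]; push_cast [map_mul]; ring
    nlinarith [ha i, h2]

/-- A subset of `ℝⁿ` is a lattice if it is discrete and its `ℝ`-linear span is all of `ℝⁿ`. -/
def IsLatticeSet {n : ℕ} (S : Set (Fin n → ℝ)) : Prop :=
  DiscreteTopology S ∧ Submodule.span ℝ S = ⊤

/-- The projection of the logarithmic embedding `l` to the first `s` coordinates:
`u ↦ (log |σ₁(u)|, …, log |σ_s(u)|)`. -/
def projLog {K : Type} [Field K] [NumberField K] {s : ℕ}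
    (σr : Fin s → (K →+* ℝ)) (u : (𝓞 K)ˣ) : Fin s → ℝ :=
  fun i => Real.log |σr i ((u : 𝓞 K) : K)|

/-- The logarithmic embedding
`l(u) = (log|σ₁(u)|, …, log|σ_s(u)|, 2 log|σ_{s+1}(u)|, …, 2 log|σ_{s+t}(u)|)`. -/
def logEmb {K : Type} [Field K] [NumberField K] {s t : ℕ}
    (σr : Fin s → (K →+* ℝ)) (σc : Fin t → (K →+* ℂ)) (u : (𝓞 K)ˣ) :
    Fin (s + t) → ℝ :=
  Fin.append (fun i => Real.log |σr i ((u : 𝓞 K) : K)|)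
    (fun j => 2 * Real.log ‖σc j ((u : 𝓞 K) : K)‖)

/-- A subgroup `U ⊆ O_K^{*,+}` is admissible if it is free abelian of rank `s` and the
projection of `l(U)` to the first `s` coordinates is a lattice in `ℝˢ`. -/
def Admissible {K : Type} [Field K] [NumberField K] {s : ℕ}
    (σr : Fin s → (K →+* ℝ)) (U : Subgroup (𝓞 K)ˣ) : Prop :=
  U ≤ posUnits K σr ∧ Nonempty (U ≃* Multiplicative (Fin s → ℤ)) ∧
    IsLatticeSet (projLog σr '' (U : Set (𝓞 K)ˣ))

/-- The affine action of a pair `(u, a) ∈ O_K^{*,+} ⋉ O_K` on `ℂˢ × ℂᵗ`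
(restricting to `ℍˢ × ℂᵗ`): `(u,a)·z = (σᵢ(u) zᵢ + σᵢ(a))ᵢ`. -/
def otAct {K : Type} [Field K] [NumberField K] {s t : ℕ}
    (σr : Fin s → (K →+* ℝ)) (σc : Fin t → (K →+* ℂ))
    (g : (𝓞 K)ˣ × 𝓞 K) (z : (Fin s → ℂ) × (Fin t → ℂ)) :
    (Fin s → ℂ) × (Fin t → ℂ) :=
  (fun i => (σr i ((g.1 : 𝓞 K) : K) : ℂ) * z.1 i + (σr i (g.2 : K) : ℂ),
   fun j => σc j ((g.1 : 𝓞 K) : K) * z.2 j + σc j (g.2 : K))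

/-- The hyperplane `L = {x ∈ ℝᵐ : ∑ xᵢ = 0}` as a submodule of `ℝᵐ`. -/
def sumZero (m : ℕ) : Submodule ℝ (Fin m → ℝ) where
  carrier := {x | ∑ i, x i = 0}
  add_mem' := by intro a b ha hb; simp_all [Finset.sum_add_distrib]
  zero_mem' := by simp
  smul_mem' := by intro c x hx; simp_all [← Finset.mul_sum]

/-!
For each real place `wᵢ`, Dirichlet's construction gives a unit `uᵢ` with `|w(uᵢ)| < 1` at every
other place `w`. By the product formula the matrix `(log wⱼ(uᵢ))` is strictly diagonally dominant,
strictly because some complex place lies outside the real ones; so the vectors `projLog uᵢ` form a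
basis of `ℝˢ`. The squares `uᵢ²` are totally positive and generate a free subgroup whose image
under `projLog` is the `ℤ`-span of the basis `2 • projLog uᵢ`.
-/

section ProdZPow

variable {G : Type*} [CommGroup G] {ι : Type*} [Fintype ι]

def prodZPowHom (g : ι → G) : Multiplicative (ι → ℤ) →* G where
  toFun n := ∏ i, g i ^ n.toAdd i
  map_one' := by simp
  map_mul' a b := by simp [zpow_add, Finset.prod_mul_distrib]

theorem prodZPowHom_apply (g : ι → G) (n : Multiplicative (ι → ℤ)) :
    prodZPowHom g n = ∏ i, g i ^ n.toAdd i := rfl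

theorem range_prodZPowHom_le {g : ι → G} {H : Subgroup G} (hg : ∀ i, g i ∈ H) :
    (prodZPowHom g).range ≤ H := by
  rintro _ ⟨n, rfl⟩
  exact H.prod_mem fun i _ ↦ H.zpow_mem (hg i) _

variable {V : Type*} [AddCommGroup V] (L : Additive G →+ V) (g : ι → G)

theorem map_prodZPowHom (n : Multiplicative (ι → ℤ)) :
    L (.ofMul (prodZPowHom g n)) = ∑ i, n.toAdd i • L (.ofMul (g i)) := by
  simp [prodZPowHom_apply, ofMul_prod, ofMul_zpow, map_sum, map_zsmul]

theorem image_range_prodZPowHom :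
    (fun x ↦ L (.ofMul x)) '' (prodZPowHom g).range =
      Submodule.span ℤ (Set.range fun i ↦ L (.ofMul (g i))) := by
  rw [← Fintype.range_linearCombination, MonoidHom.coe_range, ← Set.range_comp]
  ext x
  simp only [Set.mem_range, Function.comp_apply, map_prodZPowHom, LinearMap.coe_range,
    Fintype.linearCombination_apply]
  exact ⟨fun ⟨n, hn⟩ ↦ ⟨n.toAdd, hn⟩, fun ⟨c, hc⟩ ↦ ⟨.ofAdd c, hc⟩⟩

theorem prodZPowHom_injective (hg : LinearIndependent ℤ fun i ↦ L (.ofMul (g i))) :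
    Function.Injective (prodZPowHom g) := by
  refine (injective_iff_map_eq_one _).mpr fun n hn ↦ ?_
  have hsum : ∑ i, n.toAdd i • L (.ofMul (g i)) = 0 := by
    rw [← map_prodZPowHom, hn, ofMul_one, map_zero]
  exact toAdd_eq_zero.mp (funext (Fintype.linearIndependent_iff.mp hg _ hsum))

end ProdZPow

theorem isLatticeSet_span_int {n : ℕ} {v : Fin n → Fin n → ℝ} (hv : LinearIndependent ℝ v) :
    IsLatticeSet (Submodule.span ℤ (Set.range v) : Set (Fin n → ℝ)) := by
  let b := basisOfLinearIndependentOfCardEqFinrank' v hv (by simp)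
  have hb : ⇑b = v := coe_basisOfLinearIndependentOfCardEqFinrank' v hv _
  refine ⟨?_, ?_⟩
  · rw [← hb]
    exact inferInstanceAs (DiscreteTopology (Submodule.span ℤ (Set.range b)))
  · rw [Submodule.span_span_of_tower, ← hb, b.span_eq]

namespace NumberField

open InfinitePlace

variable {K : Type*} [Field K]

namespace InfinitePlace

def ofRealEmbedding (σ : K →+* ℝ) : InfinitePlace K :=
  mk (Complex.ofRealHom.comp σ)

theorem ofRealEmbedding_apply (σ : K →+* ℝ) (x : K) : ofRealEmbedding σ x = |σ x| := by
  simp [ofRealEmbedding, apply, Complex.norm_real]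

theorem isReal_comp_ofRealHom (σ : K →+* ℝ) :
    ComplexEmbedding.IsReal (Complex.ofRealHom.comp σ) :=
  ComplexEmbedding.isReal_iff.mpr (RingHom.ext fun x ↦ Complex.conj_ofReal (σ x))

theorem isReal_ofRealEmbedding (σ : K →+* ℝ) : IsReal (ofRealEmbedding σ) :=
  isReal_mk_iff.mpr (isReal_comp_ofRealHom σ)

theorem ofRealEmbedding_injective : Function.Injective (ofRealEmbedding (K := K)) := by
  intro σ τ h
  have hcomp : Complex.ofRealHom.comp σ = Complex.ofRealHom.comp τ := by
    rcases mk_eq_iff.mp h with h | h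
    · exact h
    · rwa [ComplexEmbedding.isReal_iff.mp (isReal_comp_ofRealHom σ)] at h
  exact RingHom.ext fun x ↦ Complex.ofReal_injective (RingHom.congr_fun hcomp x)

end InfinitePlace

namespace Units

theorem log_apply_sq (u : (𝓞 K)ˣ) (w : InfinitePlace K) :
    Real.log (w ((u ^ 2 : (𝓞 K)ˣ) : K)) = 2 * Real.log (w (u : K)) := by
  push_cast
  rw [map_pow, Real.log_pow, Nat.cast_ofNat]

theorem sum_mult_mul_abs_log_lt [NumberField K] {u : (𝓞 K)ˣ} {w₁ w₀ : InfinitePlace K}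
    (hu : ∀ w, w ≠ w₁ → Real.log (w u) < 0) (hw₀ : w₀ ≠ w₁) {S : Finset (InfinitePlace K)}
    (hw₁S : w₁ ∉ S) (hw₀S : w₀ ∉ S) :
    ∑ w ∈ S, mult w * |Real.log (w u)| < mult w₁ * Real.log (w₁ u) := by
  classical
  set F : InfinitePlace K → ℝ := fun w ↦ mult w * -Real.log (w u)
  have hF : ∀ w, w ≠ w₁ → 0 < F w := fun w hw ↦
    mul_pos (Nat.cast_pos.mpr mult_pos) (neg_pos.mpr (hu w hw))
  have hw₁ : mult w₁ * Real.log (w₁ u) = ∑ w ∈ Finset.univ.erase w₁, F w := by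
    have h := sum_mult_mul_log u
    rw [← Finset.sum_erase_add _ _ (Finset.mem_univ w₁)] at h
    simp only [F, mul_neg, Finset.sum_neg_distrib]
    linarith
  have hsub : insert w₀ S ⊆ Finset.univ.erase w₁ := by
    intro w hw
    rcases Finset.mem_insert.mp hw with rfl | hw
    · exact Finset.mem_erase.mpr ⟨hw₀, Finset.mem_univ _⟩
    · exact Finset.mem_erase.mpr ⟨ne_of_mem_of_not_mem hw hw₁S, Finset.mem_univ _⟩
  calc ∑ w ∈ S, mult w * |Real.log (w u)|
      = ∑ w ∈ S, F w := Finset.sum_congr rfl fun w hw ↦ by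
        rw [abs_of_neg (hu w (ne_of_mem_of_not_mem hw hw₁S))]
    _ < ∑ w ∈ insert w₀ S, F w := by
        rw [Finset.sum_insert hw₀S]
        exact lt_add_of_pos_left _ (hF w₀ hw₀)
    _ ≤ ∑ w ∈ Finset.univ.erase w₁, F w :=
        Finset.sum_le_sum_of_subset_of_nonneg hsub fun w hw _ ↦
          (hF w (Finset.ne_of_mem_erase hw)).le
    _ = mult w₁ * Real.log (w₁ u) := hw₁.symm

theorem linearIndependent_mult_mul_log [NumberField K] {ι : Type*} [Fintype ι]
    {pl : ι → InfinitePlace K} (hpl : Function.Injective pl) {w₀ : InfinitePlace K}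
    (hw₀ : w₀ ∉ Set.range pl) {u : ι → (𝓞 K)ˣ} (hu : ∀ i w, w ≠ pl i → Real.log (w (u i)) < 0) :
    LinearIndependent ℝ fun i j ↦ mult (pl j) * Real.log (pl j (u i)) := by
  classical
  let A : Matrix ι ι ℝ := .of fun j i ↦ mult (pl j) * Real.log (pl j (u i))
  suffices A.det ≠ 0 from Matrix.linearIndependent_cols_of_det_ne_zero this
  refine det_ne_zero_of_sum_col_lt_diag fun i ↦ ?_
  have hsum : ∑ j ∈ Finset.univ.erase i, ‖A j i‖ =
      ∑ w ∈ (Finset.univ.erase i).image pl, mult w * |Real.log (w (u i))| := by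
    rw [Finset.sum_image fun a _ b _ h ↦ hpl h]
    refine Finset.sum_congr rfl fun j _ ↦ ?_
    simp [A]
  calc ∑ j ∈ Finset.univ.erase i, ‖A j i‖
      < mult (pl i) * Real.log (pl i (u i)) := by
        rw [hsum]
        refine sum_mult_mul_abs_log_lt (hu i) (fun h ↦ hw₀ ⟨i, h.symm⟩) ?_ ?_
        · simp [hpl.eq_iff]
        · simp only [Finset.mem_image, not_exists, not_and]
          exact fun j _ h ↦ hw₀ ⟨j, h⟩
    _ ≤ ‖A i i‖ := le_abs_self _

end Units

end NumberField

section RealEmbeddings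

variable {K : Type} [Field K] [NumberField K] {s : ℕ} (σr : Fin s → (K →+* ℝ))

theorem sq_mem_posUnits (u : (𝓞 K)ˣ) : u ^ 2 ∈ posUnits K σr := fun i ↦ by
  push_cast
  rw [map_pow]
  exact pow_two_pos_of_ne_zero ((map_ne_zero _).mpr (Units.coe_ne_zero u))

def projLogHom : Additive (𝓞 K)ˣ →+ (Fin s → ℝ) where
  toFun x := projLog σr x.toMul
  map_zero' := by ext; simp [projLog]
  map_add' x y := by
    ext i
    simp only [projLog, toMul_add, Units.val_mul, map_mul, abs_mul, Pi.add_apply]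
    exact Real.log_mul (by simp) (by simp)

end RealEmbeddings

theorem exists_admissible_subgroup_general
    (K : Type) [Field K] [NumberField K] (s t : ℕ) (ht : 1 ≤ t)
    (σr : Fin s → (K →+* ℝ)) (hσr : Function.Bijective σr)
    (σc : Fin t → (K →+* ℂ))
    (hσc_nonreal : ∀ j, ¬ ComplexEmbedding.IsReal (σc j)) :
    ∃ U : Subgroup (𝓞 K)ˣ, U ≤ posUnits K σr ∧
      Nonempty (U ≃* Multiplicative (Fin s → ℤ)) ∧
      IsLatticeSet (projLog σr '' (U : Set (𝓞 K)ˣ)) := by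
  let pl i := InfinitePlace.ofRealEmbedding (σr i)
  have hwc : InfinitePlace.mk (σc ⟨0, ht⟩) ∉ Set.range pl := by
    rintro ⟨i, hi⟩
    have hreal : (pl i).IsReal := InfinitePlace.isReal_ofRealEmbedding (σr i)
    exact hσc_nonreal _ (InfinitePlace.isReal_mk_iff.mp (hi ▸ hreal))
  choose u hu using fun i ↦ Units.dirichletUnitTheorem.exists_unit K (pl i)
  let g i := u i ^ 2
  have hg i w (hw : w ≠ pl i) : Real.log (w (g i : K)) < 0 := by
    rw [Units.log_apply_sq]
    linarith [hu i w hw]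
  have hv : LinearIndependent ℝ fun i ↦ projLog σr (g i) := by
    convert Units.linearIndependent_mult_mul_log
      (InfinitePlace.ofRealEmbedding_injective.comp hσr.injective) hwc hg using 3 with i j
    simp [projLog, InfinitePlace.ofRealEmbedding_apply,
      (InfinitePlace.isReal_ofRealEmbedding _).mult_eq_one]
  refine ⟨(prodZPowHom g).range, range_prodZPowHom_le fun i ↦ sq_mem_posUnits σr (u i),
    ⟨(MonoidHom.ofInjective (prodZPowHom_injective (projLogHom σr) g
      (hv.restrict_scalars' ℤ))).symm⟩, ?_⟩
  rw [show projLog σr = fun x ↦ projLogHom σr (.ofMul x) from rfl,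
    image_range_prodZPowHom]
  exact isLatticeSet_span_int hv

/-- There exists an admissible subgroup `U` for `K`: a subgroup
`U ⊆ O_K^{*,+}`, free abelian of rank `s`, such that the image of `U` under
`u ↦ (log|σ₁(u)|, …, log|σ_s(u)|)` is a lattice in `ℝˢ`. -/
theorem exists_admissible_subgroup
    (K : Type) [Field K] [NumberField K] (s t : ℕ) (hs : 1 ≤ s) (ht : 1 ≤ t)
    (σr : Fin s → (K →+* ℝ)) (hσr : Function.Bijective σr)
    (σc : Fin t → (K →+* ℂ)) (hσc : Function.Injective σc)
    (hσc_nonreal : ∀ j, ¬ ComplexEmbedding.IsReal (σc j))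
    (hσc_nonconj : ∀ j k, ComplexEmbedding.conjugate (σc j) ≠ σc k)
    (hσc_exh : ∀ φ : K →+* ℂ, ¬ ComplexEmbedding.IsReal φ →
      ∃ j, σc j = φ ∨ ComplexEmbedding.conjugate (σc j) = φ) :
    ∃ U : Subgroup (𝓞 K)ˣ, U ≤ posUnits K σr ∧
      Nonempty (U ≃* Multiplicative (Fin s → ℤ)) ∧
      IsLatticeSet (projLog σr '' (U : Set (𝓞 K)ˣ)) :=
  exists_admissible_subgroup_general K s t ht σr hσr σc hσc_nonreal
end
end

section
/- Let U ⊆ O_K^{*,+} be an admissible subgroup. Then the action of the group Γ = U ⋉ O_K on ℍ^s × ℂ^t given by (u,a)·(z₁,…,z_{s+t}) = (σ₁(u)z₁+σ₁(a),…,σ_{s+t}(u)z_{s+t}+σ_{s+t}(a)) is properly discontinuous: for any compact subsets A, B ⊆ ℍ^s × ℂ^t, the set of γ ∈ Γ with γ(A) ∩ B ≠ ∅ is finite. -/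
/-!
Setting: `K` is a number field with exactly `s ≥ 1` real embeddings
`σr 0, …, σr (s-1) : K →+* ℝ` and `2t ≥ 2` complex (non-real) embeddings, of which
`σc 0, …, σc (t-1) : K →+* ℂ` are pairwise non-conjugate representatives.
-/

noncomputable section
open NumberField

/-!
If `(u, a)` maps `z ∈ A` to `w ∈ B`, then `σᵢ(u) = im wᵢ / im zᵢ` at every real place, so
`(log σᵢ(u))ᵢ` lies in a compact set. These vectors form a discrete subgroup of `ℝˢ`, and a totally
positive unit is determined by them, so only finitely many `u` occur. For each such `u`, every
conjugate of `a` has the absolute value of a coordinate of `w - σ(u) z`, hence is bounded, and there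
are only finitely many algebraic integers with bounded conjugates.
-/

section Translations

variable {K : Type} [Field K] {s t : ℕ}
  {σr : Fin s → (K →+* ℝ)} {σc : Fin t → (K →+* ℂ)}

variable (σr σc) in
def embProd (x : K) : (Fin s → ℂ) × (Fin t → ℂ) :=
  (fun i => (σr i x : ℂ), fun j => σc j x)

lemma otAct_eq [NumberField K] (g : (𝓞 K)ˣ × 𝓞 K) (z : (Fin s → ℂ) × (Fin t → ℂ)) :
    otAct σr σc g z = embProd σr σc ((g.1 : 𝓞 K) : K) * z + embProd σr σc (g.2 : K) :=
  rfl

lemma norm_apply_le_norm_embProd (hσr : Function.Surjective σr)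
    (hσc : ∀ φ : K →+* ℂ, ¬ ComplexEmbedding.IsReal φ →
      ∃ j, σc j = φ ∨ ComplexEmbedding.conjugate (σc j) = φ)
    (φ : K →+* ℂ) (x : K) : ‖φ x‖ ≤ ‖embProd σr σc x‖ := by
  by_cases hφ : ComplexEmbedding.IsReal φ
  · obtain ⟨i, hi⟩ := hσr hφ.embedding
    calc ‖φ x‖ = ‖(embProd σr σc x).1 i‖ := by
          simp only [embProd, hi, hφ.coe_embedding_apply]
      _ ≤ ‖embProd σr σc x‖ := (norm_le_pi_norm _ i).trans (norm_fst_le _)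
  · obtain ⟨j, hj⟩ := hσc φ hφ
    calc ‖φ x‖ = ‖(embProd σr σc x).2 j‖ := by
          rcases hj with rfl | rfl <;> simp [embProd, ComplexEmbedding.conjugate_coe_eq]
      _ ≤ ‖embProd σr σc x‖ := (norm_le_pi_norm _ j).trans (norm_snd_le _)

lemma finite_setOf_norm_embProd_le [NumberField K] (hσr : Function.Surjective σr)
    (hσc : ∀ φ : K →+* ℂ, ¬ ComplexEmbedding.IsReal φ →
      ∃ j, σc j = φ ∨ ComplexEmbedding.conjugate (σc j) = φ) (R : ℝ) :
    {a : 𝓞 K | ‖embProd σr σc (a : K)‖ ≤ R}.Finite := by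
  refine ((Embeddings.finite_of_norm_le K ℂ R).subset ?_).of_finite_image
    RingOfIntegers.coe_injective.injOn
  rintro _ ⟨a, ha, rfl⟩
  exact ⟨RingOfIntegers.isIntegral_coe a,
    fun φ => (norm_apply_le_norm_embProd hσr hσc φ a).trans ha⟩

lemma finite_setOf_otAct_image_inter_nonempty [NumberField K] (hσr : Function.Surjective σr)
    (hσc : ∀ φ : K →+* ℂ, ¬ ComplexEmbedding.IsReal φ →
      ∃ j, σc j = φ ∨ ComplexEmbedding.conjugate (σc j) = φ)
    (u : (𝓞 K)ˣ) {A B : Set ((Fin s → ℂ) × (Fin t → ℂ))} (hA : IsCompact A) (hB : IsCompact B) :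
    {a : 𝓞 K | (otAct σr σc (u, a) '' A ∩ B).Nonempty}.Finite := by
  set c := embProd σr σc ((u : 𝓞 K) : K)
  have hcompact : IsCompact ((fun p => p.2 - c * p.1) '' A ×ˢ B) :=
    (hA.prod hB).image (by fun_prop)
  obtain ⟨R, hR⟩ := hcompact.isBounded.exists_norm_le
  refine (finite_setOf_norm_embProd_le hσr hσc R).subset ?_
  rintro a ⟨_, ⟨z, hz, rfl⟩, hw⟩
  refine hR _ ⟨(z, otAct σr σc (u, a) z), ⟨hz, hw⟩, ?_⟩
  simp [otAct_eq, c]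

end Translations

section Units

variable {K : Type} [Field K] [NumberField K] {s : ℕ} {σr : Fin s → (K →+* ℝ)}

lemma projLog_mul (u v : (𝓞 K)ˣ) : projLog σr (u * v) = projLog σr u + projLog σr v := by
  funext i
  simp only [projLog, Pi.add_apply, Units.val_mul, map_mul, abs_mul]
  exact Real.log_mul (by simp) (by simp)

lemma projLog_inv (u : (𝓞 K)ˣ) : projLog σr u⁻¹ = -projLog σr u := by
  rw [eq_neg_iff_add_eq_zero, ← projLog_mul, inv_mul_cancel]
  funext i
  simp [projLog]

variable (σr) in
def projLogAddSubgroup (U : Subgroup (𝓞 K)ˣ) : AddSubgroup (Fin s → ℝ) where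
  carrier := projLog σr '' U
  add_mem' := by
    rintro _ _ ⟨u, hu, rfl⟩ ⟨v, hv, rfl⟩
    exact ⟨u * v, mul_mem hu hv, projLog_mul u v⟩
  zero_mem' := ⟨1, one_mem U, by funext i; simp [projLog]⟩
  neg_mem' := by
    rintro _ ⟨u, hu, rfl⟩
    exact ⟨u⁻¹, inv_mem hu, projLog_inv u⟩

lemma eq_of_projLog_apply_eq {u v : (𝓞 K)ˣ} (hu : u ∈ posUnits K σr) (hv : v ∈ posUnits K σr)
    (i : Fin s) (h : projLog σr u i = projLog σr v i) : u = v := by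
  simp only [projLog] at h
  rw [abs_of_pos (hu i), abs_of_pos (hv i)] at h
  have hσ := Real.log_injOn_pos (hu i) (hv i) h
  exact Units.val_injective (RingOfIntegers.coe_injective ((σr i).injective hσ))

theorem AddSubgroup.finite_inter_of_isCompact {E : Type*} [TopologicalSpace E] [AddGroup E]
    [IsTopologicalAddGroup E] [T2Space E] (L : AddSubgroup E) [DiscreteTopology L]
    {C : Set E} (hC : IsCompact C) : ((L : Set E) ∩ C).Finite :=
  (hC.inter_left AddSubgroup.isClosed_of_discrete).finite
    ((SetLike.isDiscrete_iff_discreteTopology.mpr ‹_›).mono Set.inter_subset_left)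

lemma finite_setOf_mem_projLog_mem (hs : 1 ≤ s) {U : Subgroup (𝓞 K)ˣ} (hU : Admissible σr U)
    {C : Set (Fin s → ℝ)} (hC : IsCompact C) : {u | u ∈ U ∧ projLog σr u ∈ C}.Finite := by
  have : DiscreteTopology (projLogAddSubgroup σr U) := hU.2.2.1
  refine Set.Finite.of_finite_image (f := projLog σr)
    (((projLogAddSubgroup σr U).finite_inter_of_isCompact hC).subset ?_) ?_
  · rintro _ ⟨u, ⟨hu, huC⟩, rfl⟩
    exact ⟨⟨u, hu, rfl⟩, huC⟩
  · rintro u ⟨hu, -⟩ v ⟨hv, -⟩ h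
    exact eq_of_projLog_apply_eq (hU.1 hu) (hU.1 hv) ⟨0, hs⟩ (congrFun h _)

end Units

section ImLog

variable {K : Type} [Field K] [NumberField K] {s t : ℕ}
  {σr : Fin s → (K →+* ℝ)} {σc : Fin t → (K →+* ℂ)}

def imLog (z : (Fin s → ℂ) × (Fin t → ℂ)) (i : Fin s) : ℝ := Real.log (z.1 i).im

lemma continuousOn_imLog : ContinuousOn (imLog (s := s) (t := t)) {w | ∀ i, 0 < (w.1 i).im} :=
  continuousOn_pi.2 fun i => ContinuousOn.log (by fun_prop) fun _ hw => (hw i).ne'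

lemma imLog_otAct {u : (𝓞 K)ˣ} (hu : u ∈ posUnits K σr) (a : 𝓞 K)
    {z : (Fin s → ℂ) × (Fin t → ℂ)} (hz : ∀ i, 0 < (z.1 i).im) :
    imLog (otAct σr σc (u, a) z) = projLog σr u + imLog z := by
  funext i
  simp only [imLog, otAct, projLog, Pi.add_apply, Complex.add_im, Complex.mul_im,
    Complex.ofReal_re, Complex.ofReal_im, zero_mul, add_zero, abs_of_pos (hu i)]
  exact Real.log_mul (hu i).ne' (hz i).ne'

lemma finite_setOf_exists_otAct_image_inter_nonempty (hs : 1 ≤ s) {U : Subgroup (𝓞 K)ˣ}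
    (hU : Admissible σr U) {A B : Set ((Fin s → ℂ) × (Fin t → ℂ))}
    (hA : IsCompact A) (hB : IsCompact B)
    (hApos : A ⊆ {w | ∀ i, 0 < (w.1 i).im}) (hBpos : B ⊆ {w | ∀ i, 0 < (w.1 i).im}) :
    {u | u ∈ U ∧ ∃ a, (otAct σr σc (u, a) '' A ∩ B).Nonempty}.Finite := by
  have hcont : ContinuousOn (fun p => imLog p.2 - imLog p.1) (A ×ˢ B) :=
    (continuousOn_imLog.comp continuousOn_snd fun _ hp => hBpos hp.2).sub
      (continuousOn_imLog.comp continuousOn_fst fun _ hp => hApos hp.1)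
  refine (finite_setOf_mem_projLog_mem hs hU ((hA.prod hB).image_of_continuousOn hcont)).subset ?_
  rintro u ⟨hu, a, _, ⟨z, hz, rfl⟩, hw⟩
  refine ⟨hu, (z, otAct σr σc (u, a) z), ⟨hz, hw⟩, ?_⟩
  dsimp only
  rw [imLog_otAct (hU.1 hu) a (hApos hz), add_sub_cancel_right]

end ImLog

theorem otAct_properlyDiscontinuous_general
    (K : Type) [Field K] [NumberField K] (s t : ℕ) (hs : 1 ≤ s)
    (σr : Fin s → (K →+* ℝ)) (hσr : Function.Bijective σr)
    (σc : Fin t → (K →+* ℂ))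
    (hσc_exh : ∀ φ : K →+* ℂ, ¬ ComplexEmbedding.IsReal φ →
      ∃ j, σc j = φ ∨ ComplexEmbedding.conjugate (σc j) = φ)
    (U : Subgroup (𝓞 K)ˣ) (hU : Admissible σr U) :
    ∀ A B : Set ((Fin s → ℂ) × (Fin t → ℂ)), IsCompact A → IsCompact B →
      A ⊆ {w | ∀ i, 0 < (w.1 i).im} → B ⊆ {w | ∀ i, 0 < (w.1 i).im} →
      {g : (𝓞 K)ˣ × 𝓞 K | g.1 ∈ U ∧ ((otAct σr σc g '' A) ∩ B).Nonempty}.Finite := by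
  intro A B hA hB hApos hBpos
  have hunits := finite_setOf_exists_otAct_image_inter_nonempty (σc := σc) hs hU hA hB hApos hBpos
  have htranslations := hunits.biUnion fun u _ =>
    finite_setOf_otAct_image_inter_nonempty hσr.2 hσc_exh u hA hB
  refine (hunits.prod htranslations).subset ?_
  rintro ⟨u, a⟩ ⟨hu, hne⟩
  exact ⟨⟨hu, a, hne⟩, Set.mem_biUnion ⟨hu, a, hne⟩ hne⟩

/-- Let `U ⊆ O_K^{*,+}` be admissible. The action of `Γ = U ⋉ O_K` on
`ℍˢ × ℂᵗ` is properly discontinuous: for any compact subsets `A, B ⊆ ℍˢ × ℂᵗ`, the set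
of `γ ∈ Γ` with `γ(A) ∩ B ≠ ∅` is finite. -/
theorem otAct_properlyDiscontinuous
    (K : Type) [Field K] [NumberField K] (s t : ℕ) (hs : 1 ≤ s) (ht : 1 ≤ t)
    (σr : Fin s → (K →+* ℝ)) (hσr : Function.Bijective σr)
    (σc : Fin t → (K →+* ℂ)) (hσc : Function.Injective σc)
    (hσc_nonreal : ∀ j, ¬ ComplexEmbedding.IsReal (σc j))
    (hσc_nonconj : ∀ j k, ComplexEmbedding.conjugate (σc j) ≠ σc k)
    (hσc_exh : ∀ φ : K →+* ℂ, ¬ ComplexEmbedding.IsReal φ →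
      ∃ j, σc j = φ ∨ ComplexEmbedding.conjugate (σc j) = φ)
    (U : Subgroup (𝓞 K)ˣ) (hU : Admissible σr U) :
    ∀ A B : Set ((Fin s → ℂ) × (Fin t → ℂ)), IsCompact A → IsCompact B →
      A ⊆ {w | ∀ i, 0 < (w.1 i).im} → B ⊆ {w | ∀ i, 0 < (w.1 i).im} →
      {g : (𝓞 K)ˣ × 𝓞 K | g.1 ∈ U ∧ ((otAct σr σc g '' A) ∩ B).Nonempty}.Finite :=
  otAct_properlyDiscontinuous_general K s t hs σr hσr σc hσc_exh U hU

end
end
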